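/- Let c be a tetrahedron with vertex n. With 𝐟ᵢ the face vectors of the three faces through n, 𝐞̃_{fᵢ}|c = 𝐛_{fᵢ} − 𝐛_c the restricted dual edge vectors, and 𝐥_{n,fᵢ}|c = p_{n,fᵢ} − 𝐛_{fᵢ} the boundary correction vectors with p_{n,f} = (1/2)n + (1/4)n₁ + (1/4)n₂, the following reconstruction formula holds: Σ_{i=1}^{3} (𝐟ᵢ/3) ⊗ (𝐞̃_{fᵢ}|c + 𝐥_{n,fᵢ}|c) = (|c|/4)·I₃. -/

import Mathlib

open Matrix

noncomputable section

abbrev V3 : Type := Fin 3 → ℝ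

/-- Area vector of the triangle `(a, b, c)`: half the cross product of two edge vectors. -/
def triVec (a b c : V3) : V3 := (2:ℝ)⁻¹ • ((b - a) ⨯₃ (c - a))

/-- Barycenter of a triangle. -/
def bary3 (a b c : V3) : V3 := (3:ℝ)⁻¹ • (a + b + c)

/-- Midpoint (barycenter of an edge). -/
def mid (a b : V3) : V3 := (2:ℝ)⁻¹ • (a + b)

/-- Barycenter of a tetrahedron. -/
def ctr (a b c d : V3) : V3 := (4:ℝ)⁻¹ • (a + b + c + d)

/-- Volume of the tetrahedron with vertices `a b c d`. -/
def tvol (a b c d : V3) : ℝ := |(Matrix.of ![b - a, c - a, d - a]).det| / 6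

lemma dot1 (n p1 p2 p3 : V3) :
    triVec n p2 p3 ⬝ᵥ (bary3 n p2 p3 - p1)
      = -(Matrix.of ![p1 - n, p2 - n, p3 - n]).det / 2 := by
  simp [triVec, bary3, dotProduct, Fin.sum_univ_three, cross_apply, Matrix.det_fin_three]
  ring

lemma dot2 (n p1 p2 p3 : V3) :
    triVec n p1 p3 ⬝ᵥ (bary3 n p1 p3 - p2)
      = (Matrix.of ![p1 - n, p2 - n, p3 - n]).det / 2 := by
  simp [triVec, bary3, dotProduct, Fin.sum_univ_three, cross_apply, Matrix.det_fin_three]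
  ring

lemma dot3 (n p1 p2 p3 : V3) :
    triVec n p1 p2 ⬝ᵥ (bary3 n p1 p2 - p3)
      = -(Matrix.of ![p1 - n, p2 - n, p3 - n]).det / 2 := by
  simp [triVec, bary3, dotProduct, Fin.sum_univ_three, cross_apply, Matrix.det_fin_three]
  ring

lemma key_pos (n p1 p2 p3 : V3) :
    vecMulVec ((3:ℝ)⁻¹ • (-triVec n p2 p3))
      ((bary3 n p2 p3 - ctr n p1 p2 p3) +
        (((2:ℝ)⁻¹ • n + (4:ℝ)⁻¹ • p2 + (4:ℝ)⁻¹ • p3) - bary3 n p2 p3)) +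
    vecMulVec ((3:ℝ)⁻¹ • (triVec n p1 p3))
      ((bary3 n p1 p3 - ctr n p1 p2 p3) +
        (((2:ℝ)⁻¹ • n + (4:ℝ)⁻¹ • p1 + (4:ℝ)⁻¹ • p3) - bary3 n p1 p3)) +
    vecMulVec ((3:ℝ)⁻¹ • (-triVec n p1 p2))
      ((bary3 n p1 p2 - ctr n p1 p2 p3) +
        (((2:ℝ)⁻¹ • n + (4:ℝ)⁻¹ • p1 + (4:ℝ)⁻¹ • p2) - bary3 n p1 p2)) =
      ((Matrix.of ![p1 - n, p2 - n, p3 - n]).det / 24) • (1 : Matrix (Fin 3) (Fin 3) ℝ) := by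
  ext i j
  fin_cases i <;> fin_cases j <;>
    simp [triVec, bary3, ctr, vecMulVec_apply, cross_apply, Matrix.det_fin_three,
      Matrix.one_apply, -cons_vecMulVec, -vecMulVec_cons] <;> ring

lemma key_neg (n p1 p2 p3 : V3) :
    vecMulVec ((3:ℝ)⁻¹ • (triVec n p2 p3))
      ((bary3 n p2 p3 - ctr n p1 p2 p3) +
        (((2:ℝ)⁻¹ • n + (4:ℝ)⁻¹ • p2 + (4:ℝ)⁻¹ • p3) - bary3 n p2 p3)) +
    vecMulVec ((3:ℝ)⁻¹ • (-triVec n p1 p3))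
      ((bary3 n p1 p3 - ctr n p1 p2 p3) +
        (((2:ℝ)⁻¹ • n + (4:ℝ)⁻¹ • p1 + (4:ℝ)⁻¹ • p3) - bary3 n p1 p3)) +
    vecMulVec ((3:ℝ)⁻¹ • (triVec n p1 p2))
      ((bary3 n p1 p2 - ctr n p1 p2 p3) +
        (((2:ℝ)⁻¹ • n + (4:ℝ)⁻¹ • p1 + (4:ℝ)⁻¹ • p2) - bary3 n p1 p2)) =
      (-(Matrix.of ![p1 - n, p2 - n, p3 - n]).det / 24) • (1 : Matrix (Fin 3) (Fin 3) ℝ) := by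
  ext i j
  fin_cases i <;> fin_cases j <;>
    simp [triVec, bary3, ctr, vecMulVec_apply, cross_apply, Matrix.det_fin_three,
      Matrix.one_apply, -cons_vecMulVec, -vecMulVec_cons] <;> ring

/-- for a non-degenerate tetrahedron with vertex `n` and opposite
vertices `p1 p2 p3`, let `f1 f2 f3` be the outward face vectors of the three faces
through `n` (face `fᵢ` not containing `pᵢ`), `𝐞̃_{fᵢ}|c = 𝐛_{fᵢ} − 𝐛_c` the restricted
dual edge vectors, and `𝐥_{n,fᵢ}|c = p_{n,fᵢ} − 𝐛_{fᵢ}` the boundary corrections with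
`p_{n,fᵢ} = (1/2)n + (1/4)·(other two vertices)`.  Then
`Σᵢ (fᵢ/3) ⊗ (𝐞̃_{fᵢ}|c + 𝐥_{n,fᵢ}|c) = (|c|/4)·I₃`. -/
theorem stmt_14 (n p1 p2 p3 : V3)
    (hnd : (Matrix.of ![p1 - n, p2 - n, p3 - n]).det ≠ 0)
    (f1 f2 f3 : V3)
    (hf1 : f1 = triVec n p2 p3 ∨ f1 = -triVec n p2 p3)
    (hf2 : f2 = triVec n p1 p3 ∨ f2 = -triVec n p1 p3)
    (hf3 : f3 = triVec n p1 p2 ∨ f3 = -triVec n p1 p2)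
    (hout1 : 0 < f1 ⬝ᵥ (bary3 n p2 p3 - p1))
    (hout2 : 0 < f2 ⬝ᵥ (bary3 n p1 p3 - p2))
    (hout3 : 0 < f3 ⬝ᵥ (bary3 n p1 p2 - p3)) :
    vecMulVec ((3:ℝ)⁻¹ • f1)
      ((bary3 n p2 p3 - ctr n p1 p2 p3) +
        (((2:ℝ)⁻¹ • n + (4:ℝ)⁻¹ • p2 + (4:ℝ)⁻¹ • p3) - bary3 n p2 p3)) +
    vecMulVec ((3:ℝ)⁻¹ • f2)
      ((bary3 n p1 p3 - ctr n p1 p2 p3) +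
        (((2:ℝ)⁻¹ • n + (4:ℝ)⁻¹ • p1 + (4:ℝ)⁻¹ • p3) - bary3 n p1 p3)) +
    vecMulVec ((3:ℝ)⁻¹ • f3)
      ((bary3 n p1 p2 - ctr n p1 p2 p3) +
        (((2:ℝ)⁻¹ • n + (4:ℝ)⁻¹ • p1 + (4:ℝ)⁻¹ • p2) - bary3 n p1 p2)) =
      (tvol n p1 p2 p3 / 4) • (1 : Matrix (Fin 3) (Fin 3) ℝ) := by
  set d := (Matrix.of ![p1 - n, p2 - n, p3 - n]).det with hd
  have h1 := dot1 n p1 p2 p3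
  have h2 := dot2 n p1 p2 p3
  have h3 := dot3 n p1 p2 p3
  rcases hnd.lt_or_gt with hdneg | hdpos
  · -- d < 0
    have e1 : f1 = triVec n p2 p3 := by
      rcases hf1 with h | h
      · exact h
      · exfalso; rw [h, neg_dotProduct, h1] at hout1; linarith
    have e2 : f2 = -triVec n p1 p3 := by
      rcases hf2 with h | h
      · exfalso; rw [h, h2] at hout2; linarith
      · exact h
    have e3 : f3 = triVec n p1 p2 := by
      rcases hf3 with h | h
      · exact h
      · exfalso; rw [h, neg_dotProduct, h3] at hout3; linarith
    rw [e1, e2, e3, key_neg n p1 p2 p3]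
    have : tvol n p1 p2 p3 = -d / 6 := by
      rw [tvol, ← hd, abs_of_neg hdneg]
    rw [this]; congr 1; ring
  · -- d > 0
    have e1 : f1 = -triVec n p2 p3 := by
      rcases hf1 with h | h
      · exfalso; rw [h, h1] at hout1; linarith
      · exact h
    have e2 : f2 = triVec n p1 p3 := by
      rcases hf2 with h | h
      · exact h
      · exfalso; rw [h, neg_dotProduct, h2] at hout2; linarith
    have e3 : f3 = -triVec n p1 p2 := by
      rcases hf3 with h | h
      · exfalso; rw [h, h3] at hout3; linarith
      · exact h
    rw [e1, e2, e3, key_pos n p1 p2 p3]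
    have : tvol n p1 p2 p3 = d / 6 := by
      rw [tvol, ← hd, abs_of_pos hdpos]
    rw [this]; congr 1; ring
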